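/- arXiv:1805.01577 — 2 statements merged into one kernel-verified Lean document; each statement's English description precedes it below -/
import Mathlib

section
/- Let d ≥ 2 be an integer and let σ_d² = −π⁴/8 + 12∑_{j=0}^{k} 1/(2j+1)⁴ + 2(π²/4 − 2∑_{j=0}^{k} 1/(2j+1)²)² if d − 2 = 2k + 1 is odd, and σ_d² = −π⁴/120 + 12∑_{j=1}^{k} 1/(2j)⁴ + 2(π²/12 − 2∑_{j=1}^{k} 1/(2j)²)² if d − 2 = 2k is even. Then σ_d² ≤ 2/(d − 1)², and if moreover d ≥ 4 then 1/(2d²) ≤ σ_d². -/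
open Real

open Filter Finset

-- telescoping upper bound
lemma tsum_le_of_telescope (f a : ℕ → ℝ) (hf : ∀ j, 0 ≤ f j)
    (h : ∀ j, f j ≤ a j - a (j + 1)) (ha : ∀ j, 0 ≤ a j) :
    ∑' j, f j ≤ a 0 := by
  apply Real.tsum_le_of_sum_range_le hf
  intro n
  calc ∑ i ∈ range n, f i ≤ ∑ i ∈ range n, (a i - a (i + 1)) :=
        Finset.sum_le_sum fun i _ => h i
    _ = a 0 - a n := Finset.sum_range_sub' a n
    _ ≤ a 0 := by linarith [ha n]

-- telescoping lower bound
lemma le_tsum_of_telescope (f a : ℕ → ℝ) (hs : Summable f) (hf : ∀ j, 0 ≤ f j)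
    (h : ∀ j, a j - a (j + 1) ≤ f j) (ha : Tendsto a atTop (nhds 0)) :
    a 0 ≤ ∑' j, f j := by
  have key : ∀ n, a 0 - a n ≤ ∑' j, f j := by
    intro n
    calc a 0 - a n = ∑ i ∈ range n, (a i - a (i + 1)) := (Finset.sum_range_sub' a n).symm
      _ ≤ ∑ i ∈ range n, f i := Finset.sum_le_sum fun i _ => h i
      _ ≤ ∑' j, f j := Summable.sum_le_tsum _ (fun i _ => hf i) hs
  have hT : Tendsto (fun n => a 0 - a n) atTop (nhds (a 0)) := by
    simpa using tendsto_const_nhds.sub ha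
  exact le_of_tendsto hT (Eventually.of_forall key)

lemma summable_shift (m : ℕ) (hm : 1 ≤ m) (p : ℕ) (hp : 2 ≤ p) :
    Summable fun j : ℕ => (1 : ℝ) / (2 * (j : ℝ) + m) ^ p := by
  have h1 : Summable fun j : ℕ => (1 : ℝ) / ((j : ℝ) + 1) ^ p := by
    have h0 : Summable fun n : ℕ => (1 : ℝ) / (n : ℝ) ^ p :=
      summable_one_div_nat_pow.mpr (by omega)
    have := (summable_nat_add_iff 1).mpr h0
    exact this.congr fun n => by push_cast; ring
  apply Summable.of_nonneg_of_le (fun j => by positivity) _ h1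
  intro j
  have hm' : (1 : ℝ) ≤ m := by exact_mod_cast hm
  have hj : (0 : ℝ) ≤ (j : ℝ) := Nat.cast_nonneg j
  apply one_div_le_one_div_of_le (by positivity)
  exact pow_le_pow_left₀ (by positivity) (by linarith) p

lemma tail2_le (m : ℕ) (hm : 2 ≤ m) :
    ∑' j : ℕ, (1 : ℝ) / (2 * (j : ℝ) + m) ^ 2 ≤ 1 / (2 * ((m : ℝ) - 1)) := by
  have hm' : (2 : ℝ) ≤ m := by exact_mod_cast hm
  have key : ∀ x : ℝ, 0 ≤ x →
      1 / (2 * x + m) ^ 2 ≤ 1 / (2 * (2 * x + m - 1)) - 1 / (2 * (2 * x + m + 1)) := by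
    intro x hx
    have h1 : (0 : ℝ) < 2 * x + m - 1 := by linarith
    have h2 : (0 : ℝ) < 2 * x + m + 1 := by linarith
    have h3 : (0 : ℝ) < 2 * x + m := by linarith
    rw [div_sub_div _ _ (by positivity) (by positivity),
      div_le_div_iff₀ (by positivity) (by positivity)]
    ring_nf
    nlinarith
  have := tsum_le_of_telescope (fun j => 1 / (2 * (j : ℝ) + m) ^ 2)
      (fun j => 1 / (2 * (2 * (j : ℝ) + m - 1)))
      (fun j => by positivity)
      (fun j => by
        have := key j (Nat.cast_nonneg j)
        push_cast
        convert this using 3 <;> push_cast <;> ring)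
      (fun j => by
        have hj : (0 : ℝ) ≤ (j : ℝ) := Nat.cast_nonneg j
        have h1 : (0 : ℝ) < 2 * (j : ℝ) + m - 1 := by linarith
        positivity)
  simpa using this

lemma tail2_ge (m : ℕ) (hm : 1 ≤ m) :
    1 / (2 * (m : ℝ)) ≤ ∑' j : ℕ, (1 : ℝ) / (2 * (j : ℝ) + m) ^ 2 := by
  have hm' : (1 : ℝ) ≤ m := by exact_mod_cast hm
  have key : ∀ x : ℝ, 0 ≤ x →
      1 / (2 * (2 * x + m)) - 1 / (2 * (2 * x + m + 2)) ≤ 1 / (2 * x + m) ^ 2 := by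
    intro x hx
    have h1 : (0 : ℝ) < 2 * x + m := by linarith
    have h2 : (0 : ℝ) < 2 * x + m + 2 := by linarith
    rw [div_sub_div _ _ (by positivity) (by positivity),
      div_le_div_iff₀ (by positivity) (by positivity)]
    ring_nf
    nlinarith
  have hT : Tendsto (fun j : ℕ => 1 / (2 * (2 * (j : ℝ) + m))) atTop (nhds 0) := by
    have h1 : Tendsto (fun j : ℕ => 2 * (2 * (j : ℝ) + m)) atTop atTop := by
      apply Tendsto.const_mul_atTop (by norm_num : (0:ℝ) < 2)
      apply tendsto_atTop_add_const_right
      exact (tendsto_natCast_atTop_atTop).const_mul_atTop (by norm_num : (0:ℝ) < 2)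
    have h2 := h1.inv_tendsto_atTop
    simp only [one_div]
    exact h2
  have := le_tsum_of_telescope (fun j => 1 / (2 * (j : ℝ) + m) ^ 2)
      (fun j => 1 / (2 * (2 * (j : ℝ) + m)))
      (summable_shift m hm 2 le_rfl)
      (fun j => by positivity)
      (fun j => by
        have := key j (Nat.cast_nonneg j)
        push_cast
        convert this using 3 <;> push_cast <;> ring)
      hT
  simpa using this

lemma tail4_le (m : ℕ) (hm : 4 ≤ m) :
    ∑' j : ℕ, (1 : ℝ) / (2 * (j : ℝ) + m) ^ 4
      ≤ 1 / (3 * ((m : ℝ) - 1) * m * (m + 1)) := by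
  have hm' : (4 : ℝ) ≤ m := by exact_mod_cast hm
  have keyc : ∀ c : ℝ, 4 ≤ c →
      1 / c ^ 4 ≤ 1 / (3 * (c - 1) * c * (c + 1)) - 1 / (3 * (c + 1) * (c + 2) * (c + 3)) := by
    intro c hc
    have h1 : (0 : ℝ) < c - 1 := by linarith
    have h2 : (0 : ℝ) < c := by linarith
    have h3 : (0 : ℝ) < c + 1 := by linarith
    have h4 : (0 : ℝ) < c + 2 := by linarith
    have h5 : (0 : ℝ) < c + 3 := by linarith
    have hdiff : 1 / (3 * (c - 1) * c * (c + 1)) - 1 / (3 * (c + 1) * (c + 2) * (c + 3))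
        = 2 / ((c - 1) * c * (c + 2) * (c + 3)) := by
      field_simp
      ring
    rw [hdiff, div_le_div_iff₀ (by positivity) (by positivity)]
    nlinarith [sq_nonneg (c - 4), sq_nonneg c, mul_pos h2 h2, mul_pos (mul_pos h2 h2) h2]
  have key : ∀ x : ℝ, 0 ≤ x →
      1 / (2 * x + m) ^ 4 ≤
        1 / (3 * (2 * x + m - 1) * (2 * x + m) * (2 * x + m + 1))
        - 1 / (3 * (2 * x + m + 1) * (2 * x + m + 2) * (2 * x + m + 3)) := by
    intro x hx
    exact keyc (2 * x + m) (by linarith)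
  have := tsum_le_of_telescope (fun j => 1 / (2 * (j : ℝ) + m) ^ 4)
      (fun j => 1 / (3 * (2 * (j : ℝ) + m - 1) * (2 * (j : ℝ) + m) * (2 * (j : ℝ) + m + 1)))
      (fun j => by positivity)
      (fun j => by
        have := key j (Nat.cast_nonneg j)
        push_cast
        convert this using 3 <;> push_cast <;> ring)
      (fun j => by
        have hj : (0 : ℝ) ≤ (j : ℝ) := Nat.cast_nonneg j
        have : (0 : ℝ) < 2 * (j : ℝ) + m - 1 := by linarith
        positivity)
  simpa using this

lemma even_odd_split (p : ℕ) (hp : 2 ≤ p) (S : ℝ)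
    (hS : HasSum (fun n : ℕ => (1 : ℝ) / (n : ℝ) ^ p) S) :
    HasSum (fun k : ℕ => (1 : ℝ) / (2 * (k : ℝ) + 2) ^ p) (S / 2 ^ p) ∧
      HasSum (fun k : ℕ => (1 : ℝ) / (2 * (k : ℝ) + 1) ^ p) (S - S / 2 ^ p) := by
  have heven0 : HasSum (fun k : ℕ => (1 : ℝ) / (2 * (k : ℝ)) ^ p) (S / 2 ^ p) := by
    have := hS.mul_left (1 / 2 ^ p)
    have he : (1 / 2 ^ p * S) = S / 2 ^ p := by ring
    rw [he] at this
    refine this.congr_fun fun k => ?_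
    rw [mul_pow, one_div, mul_inv, div_eq_mul_inv, div_eq_mul_inv]
    ring
  have hshift : HasSum (fun k : ℕ => (1 : ℝ) / (2 * (k : ℝ) + 2) ^ p) (S / 2 ^ p) := by
    have h0 : (fun k : ℕ => (1 : ℝ) / (2 * (k : ℝ)) ^ p) 0 = 0 := by
      simp [zero_pow (by omega : p ≠ 0)]
    have h' : HasSum (fun k : ℕ => (1 : ℝ) / (2 * (k : ℝ)) ^ p)
        (S / 2 ^ p + ∑ i ∈ range 1, (1 : ℝ) / (2 * (i : ℝ)) ^ p) := by
      have hz : ∑ i ∈ range 1, (1 : ℝ) / (2 * (i : ℝ)) ^ p = 0 := by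
        simpa using h0
      rw [hz, add_zero]
      exact heven0
    have := (hasSum_nat_add_iff (f := fun k : ℕ => (1 : ℝ) / (2 * (k : ℝ)) ^ p) 1).mpr h'
    refine this.congr_fun fun k => ?_
    push_cast
    ring_nf
  have hoddsum : Summable (fun k : ℕ => (1 : ℝ) / (2 * (k : ℝ) + 1) ^ p) :=
    (summable_shift 1 le_rfl p hp).congr fun k => by norm_num
  obtain ⟨b, hb⟩ := hoddsum
  have hcomb : HasSum (fun n : ℕ => (1 : ℝ) / (n : ℝ) ^ p) (S / 2 ^ p + b) := by
    refine HasSum.even_add_odd ?_ ?_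
    · refine heven0.congr_fun fun k => ?_
      push_cast
      ring_nf
    · refine hb.congr_fun fun k => ?_
      push_cast
      ring_nf
  have hbeq : b = S - S / 2 ^ p := by
    have := hS.unique hcomb
    linarith
  exact ⟨hshift, hbeq ▸ hb⟩

lemma partial_shift (f : ℕ → ℝ) (S : ℝ) (hS : HasSum f S) (n : ℕ) :
    ∑ j ∈ range n, f j = S - ∑' j, f (j + n) := by
  have h := Summable.sum_add_tsum_nat_add n hS.summable
  rw [hS.tsum_eq] at h
  linarith

/-- `σ_d²`: if `d − 2 = 2k + 1` is odd,
`σ_d² = −π⁴/8 + 12∑_{j=0}^{k} 1/(2j+1)⁴ + 2(π²/4 − 2∑_{j=0}^{k} 1/(2j+1)²)²`;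
if `d − 2 = 2k` is even,
`σ_d² = −π⁴/120 + 12∑_{j=1}^{k} 1/(2j)⁴ + 2(π²/12 − 2∑_{j=1}^{k} 1/(2j)²)²`. -/
noncomputable def sigmaSqDim (d : ℕ) : ℝ :=
  if Odd (d - 2) then
    -(π ^ 4) / 8 + 12 * ∑ j ∈ Finset.range ((d - 2) / 2 + 1), (1 : ℝ) / (2 * (j : ℝ) + 1) ^ 4
      + 2 * (π ^ 2 / 4
          - 2 * ∑ j ∈ Finset.range ((d - 2) / 2 + 1), (1 : ℝ) / (2 * (j : ℝ) + 1) ^ 2) ^ 2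
  else
    -(π ^ 4) / 120 + 12 * ∑ j ∈ Finset.Icc 1 ((d - 2) / 2), (1 : ℝ) / (2 * (j : ℝ)) ^ 4
      + 2 * (π ^ 2 / 12
          - 2 * ∑ j ∈ Finset.Icc 1 ((d - 2) / 2), (1 : ℝ) / (2 * (j : ℝ)) ^ 2) ^ 2

/-- **Bounds for `σ_d²`.** For every integer `d ≥ 2`, `σ_d² ≤ 2/(d−1)²`, and if
moreover `d ≥ 4` then `1/(2d²) ≤ σ_d²`. -/
theorem sigmaSqDim_bounds (d : ℕ) (hd : 2 ≤ d) :
    sigmaSqDim d ≤ 2 / ((d : ℝ) - 1) ^ 2 ∧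
      (4 ≤ d → 1 / (2 * (d : ℝ) ^ 2) ≤ sigmaSqDim d) := by
  obtain ⟨he2, ho2⟩ := even_odd_split 2 le_rfl _ hasSum_zeta_two
  obtain ⟨he4, ho4⟩ := even_odd_split 4 (by norm_num) _ hasSum_zeta_four
  rw [show π ^ 2 / 6 / 2 ^ 2 = π ^ 2 / 24 by ring] at he2
  rw [show π ^ 2 / 6 - π ^ 2 / 6 / 2 ^ 2 = π ^ 2 / 8 by ring] at ho2
  rw [show π ^ 4 / 90 / 2 ^ 4 = π ^ 4 / 1440 by ring] at he4
  rw [show π ^ 4 / 90 - π ^ 4 / 90 / 2 ^ 4 = π ^ 4 / 96 by ring] at ho4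
  set T2 : ℝ := ∑' j : ℕ, (1 : ℝ) / (2 * (j : ℝ) + d) ^ 2 with hT2
  set T4 : ℝ := ∑' j : ℕ, (1 : ℝ) / (2 * (j : ℝ) + d) ^ 4 with hT4
  have key : sigmaSqDim d = 8 * T2 ^ 2 - 12 * T4 := by
    rcases Nat.even_or_odd (d - 2) with hpar | hpar
    · -- even case : d = 2k + 2
      obtain ⟨k, hk⟩ := hpar
      have hdk : d = 2 * k + 2 := by omega
      have hq : (d - 2) / 2 = k := by omega
      have hdR : (d : ℝ) = 2 * (k : ℝ) + 2 := by rw [hdk]; push_cast; ring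
      have hIcc : ∀ p : ℕ, ∑ j ∈ Finset.Icc 1 k, (1 : ℝ) / (2 * (j : ℝ)) ^ p
          = ∑ j ∈ range k, (1 : ℝ) / (2 * (j : ℝ) + 2) ^ p := by
        intro p
        rw [show Finset.Icc 1 k = Finset.Ico 1 (k + 1) by rfl,
          Finset.sum_Ico_eq_sum_range]
        simp only [Nat.add_sub_cancel]
        refine Finset.sum_congr rfl fun i _ => ?_
        push_cast
        ring_nf
      have e2 : ∑ j ∈ range k, (1 : ℝ) / (2 * (j : ℝ) + 2) ^ 2 = π ^ 2 / 24 - T2 := by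
        rw [partial_shift _ _ he2 k, hT2]
        congr 1
        refine tsum_congr fun j => ?_
        push_cast [hdR]
        ring_nf
      have e4 : ∑ j ∈ range k, (1 : ℝ) / (2 * (j : ℝ) + 2) ^ 4 = π ^ 4 / 1440 - T4 := by
        rw [partial_shift _ _ he4 k, hT4]
        congr 1
        refine tsum_congr fun j => ?_
        push_cast [hdR]
        ring_nf
      rw [sigmaSqDim, if_neg (by rw [Nat.odd_iff]; omega), hq,
        hIcc 4, hIcc 2, e2, e4]
      ring
    · -- odd case : d = 2k + 3
      obtain ⟨k, hk⟩ := hpar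
      have hdk : d = 2 * k + 3 := by omega
      have hq : (d - 2) / 2 = k := by omega
      have hdR : (d : ℝ) = 2 * (k : ℝ) + 3 := by rw [hdk]; push_cast; ring
      have e2 : ∑ j ∈ range (k + 1), (1 : ℝ) / (2 * (j : ℝ) + 1) ^ 2 = π ^ 2 / 8 - T2 := by
        rw [partial_shift _ _ ho2 (k + 1), hT2]
        congr 1
        refine tsum_congr fun j => ?_
        push_cast [hdR]
        ring_nf
      have e4 : ∑ j ∈ range (k + 1), (1 : ℝ) / (2 * (j : ℝ) + 1) ^ 4 = π ^ 4 / 96 - T4 := by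
        rw [partial_shift _ _ ho4 (k + 1), hT4]
        congr 1
        refine tsum_congr fun j => ?_
        push_cast [hdR]
        ring_nf
      rw [sigmaSqDim, if_pos (by rw [Nat.odd_iff]; omega), hq, e2, e4]
      ring
  have hdR2 : (2 : ℝ) ≤ (d : ℝ) := by exact_mod_cast hd
  have h1 : T2 ≤ 1 / (2 * ((d : ℝ) - 1)) := tail2_le d hd
  have h2 : 1 / (2 * (d : ℝ)) ≤ T2 := tail2_ge d (by omega)
  have h40 : 0 ≤ T4 := tsum_nonneg fun j => by positivity
  have hT2pos : 0 < T2 := lt_of_lt_of_le (by positivity) h2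
  constructor
  · rw [key]
    have hsq : T2 ^ 2 ≤ (1 / (2 * ((d : ℝ) - 1))) ^ 2 :=
      pow_le_pow_left₀ hT2pos.le h1 2
    have heq : (8 : ℝ) * (1 / (2 * ((d : ℝ) - 1))) ^ 2 = 2 / ((d : ℝ) - 1) ^ 2 := by
      have : (d : ℝ) - 1 ≠ 0 := by intro h; nlinarith
      field_simp
      ring
    nlinarith
  · intro hd4
    have hd4R : (4 : ℝ) ≤ (d : ℝ) := by exact_mod_cast hd4
    rw [key]
    have h4 : T4 ≤ 1 / (3 * ((d : ℝ) - 1) * d * (d + 1)) := tail4_le d hd4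
    have hsq : (1 / (2 * (d : ℝ))) ^ 2 ≤ T2 ^ 2 :=
      pow_le_pow_left₀ (by positivity) h2 2
    have heq1 : (8 : ℝ) * (1 / (2 * (d : ℝ))) ^ 2 = 2 / (d : ℝ) ^ 2 := by
      have : (d : ℝ) ≠ 0 := by positivity
      field_simp
      ring
    have heq2 : (12 : ℝ) * (1 / (3 * ((d : ℝ) - 1) * d * (d + 1)))
        = 4 / (((d : ℝ) - 1) * d * (d + 1)) := by
      have h0 : ((d : ℝ) - 1) ≠ 0 := by intro h; nlinarith
      have h0' : (d : ℝ) ≠ 0 := by positivity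
      have h0'' : ((d : ℝ) + 1) ≠ 0 := by positivity
      field_simp
      ring
    have hfin : 4 / (((d : ℝ) - 1) * d * (d + 1)) ≤ 3 / (2 * (d : ℝ) ^ 2) := by
      rw [div_le_div_iff₀ (by nlinarith) (by positivity)]
      nlinarith
    have heq3 : (2 : ℝ) / (d : ℝ) ^ 2 - 3 / (2 * (d : ℝ) ^ 2) = 1 / (2 * (d : ℝ) ^ 2) := by
      have : (d : ℝ) ≠ 0 := by positivity
      field_simp
      ring
    nlinarith
end

section
/- Let X₁, X₂, W₁, W₂ be nonzero vectors in ℝ^m, let K ≥ 0 and r > 0, and suppose that for i = 1, 2 one has ‖X_i − W_i‖ ≤ K‖W_i‖² and ‖W_i‖ ≤ r. Writing X̂ = X/‖X‖ and Ŵ = W/‖W‖ for the corresponding unit vectors, |⟨X̂₁, X̂₂⟩ − ⟨Ŵ₁, Ŵ₂⟩| ≤ 4Kr. -/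
/-!
Normalization is Lipschitz away from the origin: `‖x̂ - ŵ‖ ≤ 2‖x - w‖ / ‖w‖`, so the hypothesis
`‖xᵢ - wᵢ‖ ≤ K‖wᵢ‖²` makes the unit vectors `2Kr`-close. Since unit vectors have norm at most one,
the inner product moves by at most the sum of the two displacements.
-/

open scoped RealInnerProductSpace

section NormedSpace

variable {E : Type*} [NormedAddCommGroup E] [NormedSpace ℝ E]

lemma norm_inv_norm_smul_le_one (x : E) : ‖‖x‖⁻¹ • x‖ ≤ 1 := by
  rw [norm_smul, norm_inv, norm_norm]
  exact inv_mul_le_one_of_le₀ le_rfl (norm_nonneg x)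

lemma norm_inv_norm_smul_sub_inv_norm_smul_le {x w : E} (hw : w ≠ 0) :
    ‖‖x‖⁻¹ • x - ‖w‖⁻¹ • w‖ ≤ 2 * ‖x - w‖ / ‖w‖ := by
  have hw' : 0 < ‖w‖ := norm_pos_iff.mpr hw
  have hsplit : ‖x‖⁻¹ • x - ‖w‖⁻¹ • w = ‖w‖⁻¹ • (x - w) + (‖x‖⁻¹ - ‖w‖⁻¹) • x := by
    rw [smul_sub, sub_smul]; abel
  have hrescale : ‖(‖x‖⁻¹ - ‖w‖⁻¹) • x‖ ≤ ‖x - w‖ / ‖w‖ := by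
    rcases eq_or_ne x 0 with rfl | hx
    · simp only [smul_zero, norm_zero]; positivity
    have hx' : 0 < ‖x‖ := norm_pos_iff.mpr hx
    have : (‖x‖⁻¹ - ‖w‖⁻¹) * ‖x‖ = (‖w‖ - ‖x‖) / ‖w‖ := by field_simp
    rw [norm_smul, Real.norm_eq_abs, ← abs_of_pos hx', ← abs_mul, abs_of_pos hx', this,
      abs_div, abs_of_pos hw']
    gcongr
    simpa only [abs_sub_comm, norm_sub_rev] using abs_norm_sub_norm_le w x
  calc ‖‖x‖⁻¹ • x - ‖w‖⁻¹ • w‖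
      ≤ ‖‖w‖⁻¹ • (x - w)‖ + ‖(‖x‖⁻¹ - ‖w‖⁻¹) • x‖ := hsplit ▸ norm_add_le _ _
    _ ≤ ‖x - w‖ / ‖w‖ + ‖x - w‖ / ‖w‖ := by
        rw [norm_smul, norm_inv, norm_norm, inv_mul_eq_div]
        gcongr
    _ = 2 * ‖x - w‖ / ‖w‖ := by ring

lemma norm_inv_norm_smul_sub_inv_norm_smul_le_of_norm_sub_le {x w : E} {K : ℝ} (hw : w ≠ 0)
    (h : ‖x - w‖ ≤ K * ‖w‖ ^ 2) : ‖‖x‖⁻¹ • x - ‖w‖⁻¹ • w‖ ≤ 2 * K * ‖w‖ := by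
  have hw' : 0 < ‖w‖ := norm_pos_iff.mpr hw
  calc ‖‖x‖⁻¹ • x - ‖w‖⁻¹ • w‖ ≤ 2 * ‖x - w‖ / ‖w‖ :=
        norm_inv_norm_smul_sub_inv_norm_smul_le hw
    _ ≤ 2 * (K * ‖w‖ ^ 2) / ‖w‖ := by gcongr
    _ = 2 * K * ‖w‖ := by field_simp

end NormedSpace

lemma abs_real_inner_sub_real_inner_le {F : Type*} [NormedAddCommGroup F]
    [InnerProductSpace ℝ F] (a b c d : F) :
    |⟪a, b⟫ - ⟪c, d⟫| ≤ ‖a - c‖ * ‖b‖ + ‖c‖ * ‖b - d‖ := by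
  have hsplit : ⟪a, b⟫ - ⟪c, d⟫ = ⟪a - c, b⟫ + ⟪c, b - d⟫ := by
    rw [inner_sub_left, inner_sub_right]; ring
  rw [hsplit]
  exact (abs_add_le _ _).trans
    (add_le_add (abs_real_inner_le_norm _ _) (abs_real_inner_le_norm _ _))

theorem abs_inner_normalize_sub_inner_normalize_le_general {m : ℕ}
    {X₁ X₂ W₁ W₂ : EuclideanSpace ℝ (Fin m)}
    (hW₁ : W₁ ≠ 0) (hW₂ : W₂ ≠ 0)
    {K r : ℝ} (hK : 0 ≤ K)
    (h₁ : ‖X₁ - W₁‖ ≤ K * ‖W₁‖ ^ 2) (h₂ : ‖X₂ - W₂‖ ≤ K * ‖W₂‖ ^ 2)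
    (hr₁ : ‖W₁‖ ≤ r) (hr₂ : ‖W₂‖ ≤ r) :
    |⟪‖X₁‖⁻¹ • X₁, ‖X₂‖⁻¹ • X₂⟫ - ⟪‖W₁‖⁻¹ • W₁, ‖W₂‖⁻¹ • W₂⟫| ≤ 4 * K * r := by
  have hd₁ := norm_inv_norm_smul_sub_inv_norm_smul_le_of_norm_sub_le hW₁ h₁
  have hd₂ := norm_inv_norm_smul_sub_inv_norm_smul_le_of_norm_sub_le hW₂ h₂
  have hu₁ := norm_inv_norm_smul_le_one X₂
  have hu₂ := norm_inv_norm_smul_le_one W₁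
  calc _ ≤ ‖‖X₁‖⁻¹ • X₁ - ‖W₁‖⁻¹ • W₁‖ * ‖‖X₂‖⁻¹ • X₂‖
          + ‖‖W₁‖⁻¹ • W₁‖ * ‖‖X₂‖⁻¹ • X₂ - ‖W₂‖⁻¹ • W₂‖ :=
        abs_real_inner_sub_real_inner_le _ _ _ _
    _ ≤ 2 * K * ‖W₁‖ * 1 + 1 * (2 * K * ‖W₂‖) := by gcongr
    _ ≤ 4 * K * r := by nlinarith

/-- **Closeness of cosines of angles after projection.**
If `X₁, X₂, W₁, W₂` are nonzero vectors of `ℝ^m` with `‖Xᵢ − Wᵢ‖ ≤ K‖Wᵢ‖²` and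
`‖Wᵢ‖ ≤ r` for `i = 1, 2` (where `K ≥ 0`, `r > 0`), then the inner products of the
normalized vectors satisfy `|⟨X̂₁, X̂₂⟩ − ⟨Ŵ₁, Ŵ₂⟩| ≤ 4Kr`. -/
theorem abs_inner_normalize_sub_inner_normalize_le {m : ℕ}
    {X₁ X₂ W₁ W₂ : EuclideanSpace ℝ (Fin m)}
    (hX₁ : X₁ ≠ 0) (hX₂ : X₂ ≠ 0) (hW₁ : W₁ ≠ 0) (hW₂ : W₂ ≠ 0)
    {K r : ℝ} (hK : 0 ≤ K) (hr : 0 < r)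
    (h₁ : ‖X₁ - W₁‖ ≤ K * ‖W₁‖ ^ 2) (h₂ : ‖X₂ - W₂‖ ≤ K * ‖W₂‖ ^ 2)
    (hr₁ : ‖W₁‖ ≤ r) (hr₂ : ‖W₂‖ ≤ r) :
    |⟪‖X₁‖⁻¹ • X₁, ‖X₂‖⁻¹ • X₂⟫ - ⟪‖W₁‖⁻¹ • W₁, ‖W₂‖⁻¹ • W₂⟫| ≤ 4 * K * r :=
  abs_inner_normalize_sub_inner_normalize_le_general hW₁ hW₂ hK h₁ h₂ hr₁ hr₂
end
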